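/- Let N ≥ 1, 0 < s < 1, let Ω ⊂ ℝᴺ be a bounded measurable set, and let φ : (0,∞) → (0,∞) satisfy (φ₁) and (φ₂) with Φ(t) = ∫₀^{|t|} τφ(τ) dτ. Then there exists a constant C > 0, depending only on s, N, Φ and Ω, such that for every measurable u : ℝᴺ → ℝ with u = 0 almost everywhere on ℝᴺ ∖ Ω, the modular Poincaré inequality ∫_Ω Φ(|u(x)|) dx ≤ ∬_{ℝᴺ×ℝᴺ} Φ(C |u(x) − u(y)| / |x−y|ˢ) |x−y|^{−N} dx dy holds, both sides being Lebesgue integrals with values in [0,∞]. -/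

import Mathlib

open MeasureTheory Filter Set Metric
open scoped ENNReal

/-! The primitive `Φ` of the nondecreasing function `τ ↦ τ φ(τ)` is superlinear:
`K Φ(t) ≤ Φ(K t)` for `K ≥ 1`. Put a unit ball `B` outside `Ω`, within distance `D` of every
point of `Ω`. For `x ∈ Ω` and `y ∈ B` we have `u(y) = 0` and `|x - y| ≤ D`, so with `C = K Dˢ`
the integrand of the modular at `(x, y)` is at least `K D^{-N} Φ(|u(x)|)`. Integrating over
`Ω × B` bounds the modular below by `K D^{-N} |B| ∫_Ω Φ(|u|)`, and `K` is chosen so that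
`K D^{-N} |B| ≥ 1`. -/

theorem monotoneOn_Ici_self_mul {φ : ℝ → ℝ} (hφpos : ∀ t, 0 < t → 0 < φ t)
    (hφmono : StrictMonoOn (fun t => t * φ t) (Ioi 0)) :
    MonotoneOn (fun t => t * φ t) (Ici 0) := by
  intro a ha b hb hab
  rcases (mem_Ici.1 ha).eq_or_lt with rfl | ha'
  · rcases (mem_Ici.1 hb).eq_or_lt with rfl | hb'
    · exact le_rfl
    · simpa using (mul_pos hb' (hφpos b hb')).le
  · exact hφmono.monotoneOn ha' (ha'.trans_le hab) hab

section PrimitiveOfMonotone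

variable {g Φ : ℝ → ℝ}

theorem intervalIntegrable_of_monotoneOn_Ici (hg : MonotoneOn g (Ici 0)) {a b : ℝ}
    (ha : 0 ≤ a) (hb : 0 ≤ b) : IntervalIntegrable g volume a b :=
  (hg.mono fun _ hx => (le_min ha hb).trans hx.1).intervalIntegrable

theorem monotoneOn_integral_of_monotoneOn_Ici (hg : MonotoneOn g (Ici 0)) (hg0 : 0 ≤ g 0) :
    MonotoneOn (fun t => ∫ τ in (0 : ℝ)..t, g τ) (Ici 0) := by
  intro a ha b hb hab
  refine intervalIntegral.integral_mono_interval le_rfl ha hab ?_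
    (intervalIntegrable_of_monotoneOn_Ici hg le_rfl hb)
  filter_upwards [ae_restrict_mem measurableSet_Ioc] with τ hτ
  exact hg0.trans (hg self_mem_Ici (mem_Ici.2 hτ.1.le) hτ.1.le)

/-- Substituting `σ = K τ` turns `K ∫₀ᵗ g` into `∫₀^{Kt} g(σ / K)`, and `g(σ / K) ≤ g(σ)`. -/
theorem mul_integral_le_integral_mul (hg : MonotoneOn g (Ici 0)) {K t : ℝ} (hK : 1 ≤ K)
    (ht : 0 ≤ t) : K * ∫ τ in (0 : ℝ)..t, g τ ≤ ∫ τ in (0 : ℝ)..K * t, g τ := by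
  have hK0 : 0 < K := zero_lt_one.trans_le hK
  have hKt : 0 ≤ K * t := mul_nonneg hK0.le ht
  have hscale : ∫ σ in (0 : ℝ)..K * t, g (σ / K) = K * ∫ τ in (0 : ℝ)..t, g τ := by
    rw [intervalIntegral.integral_comp_div g hK0.ne', zero_div, mul_div_cancel_left₀ t hK0.ne',
      smul_eq_mul]
  have hrescaled : MonotoneOn (fun σ => g (σ / K)) (uIcc 0 (K * t)) := by
    intro x hx y hy hxy
    rw [uIcc_of_le hKt] at hx hy
    exact hg (div_nonneg hx.1 hK0.le) (div_nonneg hy.1 hK0.le)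
      (div_le_div_of_nonneg_right hxy hK0.le)
  rw [← hscale]
  exact intervalIntegral.integral_mono_on hKt hrescaled.intervalIntegrable
    (intervalIntegrable_of_monotoneOn_Ici hg le_rfl hKt) fun σ hσ =>
      hg (div_nonneg hσ.1 hK0.le) hσ.1 (div_le_self hσ.1 hK)

theorem monotoneOn_of_eq_integral_abs (hg : MonotoneOn g (Ici 0)) (hg0 : 0 ≤ g 0)
    (hΦ : ∀ t, Φ t = ∫ τ in (0 : ℝ)..|t|, g τ) : MonotoneOn Φ (Ici 0) := by
  intro a ha b hb hab
  rw [hΦ, hΦ, abs_of_nonneg ha, abs_of_nonneg hb]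
  exact monotoneOn_integral_of_monotoneOn_Ici hg hg0 ha hb hab

theorem nonneg_of_eq_integral_abs (hg : MonotoneOn g (Ici 0)) (hg0 : 0 ≤ g 0)
    (hΦ : ∀ t, Φ t = ∫ τ in (0 : ℝ)..|t|, g τ) (t : ℝ) : 0 ≤ Φ t := by
  rw [hΦ]
  simpa using monotoneOn_integral_of_monotoneOn_Ici hg hg0 self_mem_Ici (abs_nonneg t)
    (abs_nonneg t)

theorem mul_le_of_eq_integral_abs (hg : MonotoneOn g (Ici 0))
    (hΦ : ∀ t, Φ t = ∫ τ in (0 : ℝ)..|t|, g τ) {K t : ℝ} (hK : 1 ≤ K) (ht : 0 ≤ t) :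
    K * Φ t ≤ Φ (K * t) := by
  rw [hΦ, hΦ, abs_of_nonneg ht, abs_of_nonneg (mul_nonneg (zero_le_one.trans hK) ht)]
  exact mul_integral_le_integral_mul hg hK ht

end PrimitiveOfMonotone

theorem MonotoneOn.measurable_comp_abs {f : ℝ → ℝ} (hf : MonotoneOn f (Ici 0)) :
    Measurable fun t => f |t| := by
  have hmono : Monotone fun t => f (max t 0) := fun a b hab =>
    hf (le_max_right a 0) (le_max_right b 0) (max_le_max hab le_rfl)
  have hcomp : (fun t => f |t|) = (fun t => f (max t 0)) ∘ abs := by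
    funext t
    simp only [Function.comp_apply, max_eq_left (abs_nonneg t)]
  exact hcomp ▸ hmono.measurable.comp measurable_abs

theorem ofReal_mul_le_ofReal_mul_rpow_neg {Φ : ℝ → ℝ} (hmono : MonotoneOn Φ (Ici 0))
    (hnonneg : ∀ t, 0 ≤ Φ t) (hsuper : ∀ K t : ℝ, 1 ≤ K → 0 ≤ t → K * Φ t ≤ Φ (K * t))
    {K t s n d D : ℝ} (hK : 1 ≤ K) (ht : 0 ≤ t) (hs : 0 ≤ s) (hn : 0 ≤ n) (hd : 0 < d)
    (hdD : d ≤ D) :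
    ENNReal.ofReal (Φ t) * ENNReal.ofReal (K * D ^ (-n))
      ≤ ENNReal.ofReal (Φ (K * D ^ s * t / d ^ s)) * ENNReal.ofReal (d ^ (-n)) := by
  have hKt : 0 ≤ K * t := mul_nonneg (zero_le_one.trans hK) ht
  have hgrow : K * t ≤ K * D ^ s * t / d ^ s := by
    rw [mul_right_comm, mul_div_assoc]
    exact le_mul_of_one_le_right hKt
      ((one_le_div (Real.rpow_pos_of_pos hd s)).2 (Real.rpow_le_rpow hd.le hdD hs))
  rw [← ENNReal.ofReal_mul (hnonneg _), ← ENNReal.ofReal_mul (hnonneg _)]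
  refine ENNReal.ofReal_le_ofReal ?_
  calc Φ t * (K * D ^ (-n)) = K * Φ t * D ^ (-n) := by ring
    _ ≤ Φ (K * t) * D ^ (-n) :=
        mul_le_mul_of_nonneg_right (hsuper K t hK ht) (Real.rpow_nonneg (hd.le.trans hdD) _)
    _ ≤ Φ (K * D ^ s * t / d ^ s) * d ^ (-n) :=
        mul_le_mul (hmono hKt (hKt.trans hgrow) hgrow)
          (Real.rpow_le_rpow_of_nonpos hd hdD (neg_nonpos.2 hn))
          (Real.rpow_nonneg (hd.le.trans hdD) _) (hnonneg _)

theorem Bornology.IsBounded.exists_ball_disjoint_dist_le {E : Type*} [NormedAddCommGroup E]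
    [NormedSpace ℝ E] [Nontrivial E] {Ω : Set E} (hΩ : Bornology.IsBounded Ω) :
    ∃ z : E, ∃ D > 0, Disjoint Ω (ball z 1) ∧ ∀ x ∈ Ω, ∀ y ∈ ball z 1, dist x y ≤ D := by
  obtain ⟨R, hR⟩ := hΩ.subset_closedBall 0
  set R' := max R 0
  have hnorm : ∀ x ∈ Ω, ‖x‖ ≤ R' := fun x hx =>
    (mem_closedBall_zero_iff.1 (hR hx)).trans (le_max_left R 0)
  obtain ⟨z, hz⟩ := exists_norm_eq E (c := R' + 2) (by positivity)
  refine ⟨z, 2 * R' + 3, by positivity, disjoint_left.2 fun x hx hxz => ?_, fun x hx y hy => ?_⟩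
  · have := norm_sub_norm_le z x
    rw [← dist_eq_norm', mem_ball] at *
    linarith [hnorm x hx]
  · have := norm_sub_norm_le y z
    rw [← dist_eq_norm, mem_ball] at *
    linarith [hnorm x hx, dist_le_norm_add_norm x y]

theorem setLIntegral_le_lintegral_prod_of_ae_le {X Y : Type*} [MeasurableSpace X]
    [MeasurableSpace Y] {μ : Measure X} {ν : Measure Y} [SFinite μ] [SFinite ν] {Ω : Set X}
    {A : Set Y} (hΩ : MeasurableSet Ω) (hA : MeasurableSet A) {F : X → ℝ≥0∞}
    {G : X × Y → ℝ≥0∞} {c : ℝ≥0∞} (hF : AEMeasurable F (μ.restrict Ω)) (hc : 1 ≤ c * ν A)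
    (hFG : ∀ᵐ p ∂μ.prod ν, p ∈ Ω ×ˢ A → F p.1 * c ≤ G p) :
    ∫⁻ x in Ω, F x ∂μ ≤ ∫⁻ p, G p ∂μ.prod ν := by
  have hprod := Measure.prod_restrict (μ := μ) (ν := ν) Ω A
  calc ∫⁻ x in Ω, F x ∂μ ≤ (∫⁻ x in Ω, F x ∂μ) * (c * ν A) := le_mul_of_one_le_right' hc
    _ = ∫⁻ p, F p.1 * c ∂(μ.restrict Ω).prod (ν.restrict A) := by
        rw [lintegral_prod_mul hF aemeasurable_const, setLIntegral_const]
    _ ≤ ∫⁻ p, G p ∂(μ.restrict Ω).prod (ν.restrict A) := by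
        refine lintegral_mono_ae ?_
        rw [hprod]
        exact (ae_restrict_iff' (hΩ.prod hA)).2 hFG
    _ ≤ ∫⁻ p, G p ∂μ.prod ν := lintegral_mono' (hprod ▸ Measure.restrict_le_self) le_rfl

theorem stmt17_general
    (N : ℕ) (hN : 1 ≤ N) (s : ℝ) (hs0 : 0 < s)
    (Ω : Set (EuclideanSpace ℝ (Fin N)))
    (hΩm : MeasurableSet Ω) (hΩb : Bornology.IsBounded Ω)
    (φ : ℝ → ℝ)
    (hφpos : ∀ t : ℝ, 0 < t → 0 < φ t)
    (hφmono : StrictMonoOn (fun t => t * φ t) (Set.Ioi (0:ℝ)))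
    (Φ : ℝ → ℝ)
    (hΦ : ∀ t : ℝ, Φ t = ∫ τ in (0:ℝ)..|t|, τ * φ τ) :
    ∃ C : ℝ, 0 < C ∧
      ∀ u : EuclideanSpace ℝ (Fin N) → ℝ, Measurable u →
        (∀ᵐ x ∂(volume.restrict Ωᶜ), u x = 0) →
        ∫⁻ x in Ω, ENNReal.ofReal (Φ |u x|)
          ≤ ∫⁻ p : EuclideanSpace ℝ (Fin N) × EuclideanSpace ℝ (Fin N),
              ENNReal.ofReal (Φ (C * |u p.1 - u p.2| / dist p.1 p.2 ^ s))
                * ENNReal.ofReal (dist p.1 p.2 ^ (-(N:ℝ))) := by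
  have hg := monotoneOn_Ici_self_mul hφpos hφmono
  have hg0 : 0 ≤ 0 * φ 0 := (zero_mul _).ge
  have hΦmono := monotoneOn_of_eq_integral_abs hg hg0 hΦ
  have : Nonempty (Fin N) := ⟨⟨0, hN⟩⟩
  obtain ⟨z, D, hD, hdisj, hdist⟩ := hΩb.exists_ball_disjoint_dist_le
  have hB : volume (ball z 1) ≠ ∞ := measure_ball_lt_top.ne
  set a := (volume (ball z 1)).toReal
  have ha : 0 < a := ENNReal.toReal_pos (measure_ball_pos volume z one_pos).ne' hB
  set K := max 1 (D ^ (N : ℝ) / a)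
  refine ⟨K * D ^ s, by positivity, fun u hu hu0 => ?_⟩
  have hc : 1 ≤ ENNReal.ofReal (K * D ^ (-(N : ℝ))) * volume (ball z 1) := by
    rw [← ENNReal.ofReal_toReal hB, ← ENNReal.ofReal_mul (by positivity), ← ENNReal.ofReal_one]
    refine ENNReal.ofReal_le_ofReal ?_
    have hDN : 0 < D ^ (N : ℝ) := by positivity
    calc (1 : ℝ) = D ^ (N : ℝ) / a * D ^ (-(N : ℝ)) * a := by
          rw [Real.rpow_neg hD.le]; field_simp
      _ ≤ K * D ^ (-(N : ℝ)) * a := by gcongr; exact le_max_right _ _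
  rw [Measure.volume_eq_prod]
  refine setLIntegral_le_lintegral_prod_of_ae_le hΩm measurableSet_ball
    (ENNReal.measurable_ofReal.comp (hΦmono.measurable_comp_abs.comp hu)).aemeasurable hc ?_
  filter_upwards [Measure.quasiMeasurePreserving_snd.ae ((ae_restrict_iff' hΩm.compl).1 hu0)]
    with p hp ⟨hx, hy⟩
  rw [hp (disjoint_right.1 hdisj hy), sub_zero]
  exact ofReal_mul_le_ofReal_mul_rpow_neg hΦmono (nonneg_of_eq_integral_abs hg hg0 hΦ)
      (fun K t => mul_le_of_eq_integral_abs hg hΦ) (le_max_left _ _) (abs_nonneg _) hs0.le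
      (Nat.cast_nonneg N) (dist_pos.2 (hdisj.ne_of_mem hx hy)) (hdist _ hx _ hy)

/-- Modular Poincaré inequality: for a bounded measurable `Ω ⊂ ℝᴺ` and
`0 < s < 1`, there is `C > 0` (depending only on `s, N, Φ, Ω`) such that every measurable
`u` vanishing a.e. outside `Ω` satisfies
`∫_Ω Φ(|u|) ≤ ∬ Φ(C|u(x) − u(y)|/|x−y|ˢ)|x−y|^{−N} dx dy` (integrals valued in `[0,∞]`). -/
theorem stmt17
    (N : ℕ) (hN : 1 ≤ N) (s : ℝ) (hs0 : 0 < s) (hs1 : s < 1)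
    (Ω : Set (EuclideanSpace ℝ (Fin N)))
    (hΩm : MeasurableSet Ω) (hΩb : Bornology.IsBounded Ω)
    (φ : ℝ → ℝ)
    (hφpos : ∀ t : ℝ, 0 < t → 0 < φ t)
    (hφmono : StrictMonoOn (fun t => t * φ t) (Set.Ioi (0:ℝ)))
    (hφ0 : Tendsto (fun t => t * φ t) (nhdsWithin 0 (Set.Ioi 0)) (nhds 0))
    (hφtop : Tendsto (fun t => t * φ t) atTop atTop)
    (Φ : ℝ → ℝ)
    (hΦ : ∀ t : ℝ, Φ t = ∫ τ in (0:ℝ)..|t|, τ * φ τ) :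
    ∃ C : ℝ, 0 < C ∧
      ∀ u : EuclideanSpace ℝ (Fin N) → ℝ, Measurable u →
        (∀ᵐ x ∂(volume.restrict Ωᶜ), u x = 0) →
        ∫⁻ x in Ω, ENNReal.ofReal (Φ |u x|)
          ≤ ∫⁻ p : EuclideanSpace ℝ (Fin N) × EuclideanSpace ℝ (Fin N),
              ENNReal.ofReal (Φ (C * |u p.1 - u p.2| / dist p.1 p.2 ^ s))
                * ENNReal.ofReal (dist p.1 p.2 ^ (-(N:ℝ))) :=
  stmt17_general N hN s hs0 Ω hΩm hΩb φ hφpos hφmono Φ hΦ
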